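/- For the system ẋ₁ = -x₂ + x₁(1-(x₁²+x₂²)), ẋ₂ = x₁ + x₂(1-(x₁²+x₂²)) with φ = (1/4)(x₁²+x₂²)(x₁²+x₂²-2) and friction matrix S(x) = ((1-x₁²-x₂²)²/(1+(1-x₁²-x₂²)²))·I, the dissipation power H_P = fᵀSf equals (x₁²+x₂²)(x₁²+x₂²-1)², so that |∇φ·f| = H_P. -/
import Mathlib

/-- With S(x) = ((1-x₁²-x₂²)²/(1+(1-x₁²-x₂²)²))·I, the dissipation power
H_P = fᵀSf equals (x₁²+x₂²)(x₁²+x₂²-1)², and |∇φ·f| = H_P. -/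
theorem stmt6 (x₁ x₂ : ℝ) :
    ((1 - x₁ ^ 2 - x₂ ^ 2) ^ 2 / (1 + (1 - x₁ ^ 2 - x₂ ^ 2) ^ 2)) *
        ((-x₂ + x₁ * (1 - (x₁ ^ 2 + x₂ ^ 2))) ^ 2 +
          (x₁ + x₂ * (1 - (x₁ ^ 2 + x₂ ^ 2))) ^ 2) =
      (x₁ ^ 2 + x₂ ^ 2) * (x₁ ^ 2 + x₂ ^ 2 - 1) ^ 2 ∧
    |(-((x₁ ^ 2 + x₂ ^ 2) * (x₁ ^ 2 + x₂ ^ 2 - 1) ^ 2))| =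
      ((1 - x₁ ^ 2 - x₂ ^ 2) ^ 2 / (1 + (1 - x₁ ^ 2 - x₂ ^ 2) ^ 2)) *
        ((-x₂ + x₁ * (1 - (x₁ ^ 2 + x₂ ^ 2))) ^ 2 +
          (x₁ + x₂ * (1 - (x₁ ^ 2 + x₂ ^ 2))) ^ 2) := by
  have hd : (1 + (1 - x₁ ^ 2 - x₂ ^ 2) ^ 2) ≠ 0 := by positivity
  have h1 : ((1 - x₁ ^ 2 - x₂ ^ 2) ^ 2 / (1 + (1 - x₁ ^ 2 - x₂ ^ 2) ^ 2)) *
        ((-x₂ + x₁ * (1 - (x₁ ^ 2 + x₂ ^ 2))) ^ 2 +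
          (x₁ + x₂ * (1 - (x₁ ^ 2 + x₂ ^ 2))) ^ 2) =
      (x₁ ^ 2 + x₂ ^ 2) * (x₁ ^ 2 + x₂ ^ 2 - 1) ^ 2 := by
    field_simp
    ring
  refine ⟨h1, ?_⟩
  rw [h1, abs_neg, abs_of_nonneg (by positivity)]
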